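/- Let τ ∈ (0,1) and let ε be a real-valued random variable with cumulative distribution function F satisfying F(0) = P(ε ≤ 0) = τ. Then for every v ∈ ℝ, E[ρ_τ(ε − v) − ρ_τ(ε)] = ∫₀^v (F(s) − F(0)) ds ≥ 0; in particular 0 minimizes v ↦ E[ρ_τ(ε − v) − ρ_τ(ε)]. -/

import Mathlib

/-!
Knight's identity: for every real `u`, `ρ_τ(u - v) - ρ_τ(u) = ∫₀^v (1{u ≤ s} - τ) ds`, because
`s ↦ 1{u ≤ s}` is the right derivative of `w ↦ max (w - u) 0`. Taking expectations and swapping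
the (bounded) integrals by Fubini turns the left side into `∫₀^v (F(s) - τ) ds`, and `τ = F(0)`.
Since `F` is monotone, `F(s) - F(0)` has the sign of `s`, so the oriented integral is nonnegative.
-/

open MeasureTheory Set intervalIntegral

noncomputable def checkLoss (τ u : ℝ) : ℝ := (τ - if u ≤ 0 then 1 else 0) * u

lemma hasDerivWithinAt_max_sub_const_zero_Ioi (u x : ℝ) :
    HasDerivWithinAt (fun w => max (w - u) 0) (if u ≤ x then 1 else 0) (Ioi x) x := by
  split_ifs with hux
  · exact ((hasDerivAt_id x).sub_const u).hasDerivWithinAt.congr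
      (fun y hy => max_eq_left (by linarith [mem_Ioi.1 hy])) (max_eq_left (sub_nonneg.2 hux))
  · refine ((hasDerivAt_const x (0 : ℝ)).congr_of_eventuallyEq ?_).hasDerivWithinAt
    filter_upwards [Iio_mem_nhds (not_le.1 hux)] with w hw
    exact max_eq_right (by linarith [mem_Iio.1 hw])

lemma monotone_ite_le_one_zero (u : ℝ) : Monotone fun s : ℝ => if u ≤ s then (1 : ℝ) else 0 := by
  intro s t hst
  dsimp only
  split_ifs <;> linarith

lemma integral_ite_le_one_zero (u a b : ℝ) :
    ∫ s in a..b, (if u ≤ s then (1 : ℝ) else 0) = max (b - u) 0 - max (a - u) 0 :=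
  integral_eq_sub_of_hasDeriv_right (by fun_prop)
    (fun x _ => hasDerivWithinAt_max_sub_const_zero_Ioi u x)
    (monotone_ite_le_one_zero u).intervalIntegrable

lemma checkLoss_sub_sub_checkLoss (τ u v : ℝ) :
    checkLoss τ (u - v) - checkLoss τ u = ∫ s in 0..v, ((if u ≤ s then 1 else 0) - τ) := by
  rw [integral_sub (monotone_ite_le_one_zero u).intervalIntegrable intervalIntegrable_const,
    integral_ite_le_one_zero, intervalIntegral.integral_const, smul_eq_mul]
  simp only [checkLoss, max_def]
  split_ifs <;> linarith

lemma integral_intervalIntegral_ite_le_sub {Ω : Type*} [MeasurableSpace Ω] (μ : Measure Ω)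
    [IsProbabilityMeasure μ] {X : Ω → ℝ} (hX : Measurable X) (a b c : ℝ) :
    ∫ ω, (∫ s in a..b, ((if X ω ≤ s then 1 else 0) - c)) ∂μ
      = ∫ s in a..b, (μ.real {ω | X ω ≤ s} - c) := by
  have : IsFiniteMeasure (volume.restrict (uIoc a b)) := Real.isFiniteMeasure_restrict_Ioc _ _
  have hmeas : Measurable fun p : ℝ × Ω => (if X p.2 ≤ p.1 then (1 : ℝ) else 0) - c :=
    (Measurable.ite (measurableSet_le (hX.comp measurable_snd) measurable_fst)
      measurable_const measurable_const).sub_const c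
  have hint : Integrable (Function.uncurry fun s ω => (if X ω ≤ s then (1 : ℝ) else 0) - c)
      ((volume.restrict (uIoc a b)).prod μ) := by
    refine .of_bound hmeas.aestronglyMeasurable (1 + |c|) (.of_forall fun p => ?_)
    refine (norm_sub_le _ _).trans (add_le_add ?_ le_rfl)
    split_ifs <;> simp
  rw [← intervalIntegral_integral_swap hint]
  congr 1 with s
  have hind : Integrable (fun ω => if X ω ≤ s then (1 : ℝ) else 0) μ :=
    (integrable_const 1).indicator (hX measurableSet_Iic)
  have hcdf : ∫ ω, (if X ω ≤ s then (1 : ℝ) else 0) ∂μ = μ.real {ω | X ω ≤ s} :=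
    integral_indicator_one (hX measurableSet_Iic)
  rw [integral_sub hind (integrable_const c), hcdf, MeasureTheory.integral_const, probReal_univ,
    one_smul]

lemma Monotone.intervalIntegral_sub_nonneg {F : ℝ → ℝ} (hF : Monotone F) (a b : ℝ) :
    0 ≤ ∫ s in a..b, (F s - F a) := by
  rcases le_total a b with hab | hba
  · exact integral_nonneg hab fun s hs => sub_nonneg.2 (hF hs.1)
  · rw [integral_symm, ← intervalIntegral.integral_neg]
    exact integral_nonneg hba fun s hs => neg_nonneg.2 (sub_nonpos.2 (hF hs.2))

theorem expected_check_loss_nonneg_at_quantile_general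
    {Ω : Type*} [MeasurableSpace Ω] (μ : Measure Ω) [IsProbabilityMeasure μ]
    (ε : Ω → ℝ) (hε : Measurable ε) (τ : ℝ)
    (hquantile : (μ {ω | ε ω ≤ 0}).toReal = τ) (v : ℝ) :
    (∫ ω, ((τ - if ε ω - v ≤ 0 then 1 else 0) * (ε ω - v)
          - (τ - if ε ω ≤ 0 then 1 else 0) * ε ω) ∂μ
        = ∫ s in (0 : ℝ)..v, ((μ {ω | ε ω ≤ s}).toReal - (μ {ω | ε ω ≤ 0}).toReal))
    ∧ 0 ≤ ∫ ω, ((τ - if ε ω - v ≤ 0 then 1 else 0) * (ε ω - v)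
          - (τ - if ε ω ≤ 0 then 1 else 0) * ε ω) ∂μ := by
  have hcdf_mono : Monotone fun s => μ.real {ω | ε ω ≤ s} :=
    fun s t hst => measureReal_mono fun ω (h : ε ω ≤ s) => h.trans hst
  have heq : ∫ ω, (checkLoss τ (ε ω - v) - checkLoss τ (ε ω)) ∂μ
      = ∫ s in (0 : ℝ)..v, (μ.real {ω | ε ω ≤ s} - μ.real {ω | ε ω ≤ 0}) := by
    simp only [checkLoss_sub_sub_checkLoss]
    rw [integral_intervalIntegral_ite_le_sub μ hε, measureReal_def μ {ω | ε ω ≤ 0}, hquantile]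
  exact ⟨heq, heq ▸ hcdf_mono.intervalIntegral_sub_nonneg 0 v⟩

/-- If the cdf of `ε` satisfies `F(0) = P(ε ≤ 0) = τ`, then for every `v ∈ ℝ`,
`E[ρ_τ(ε − v) − ρ_τ(ε)] = ∫₀^v (F(s) − F(0)) ds ≥ 0`; in particular `0` minimizes
`v ↦ E[ρ_τ(ε − v) − ρ_τ(ε)]`. -/
theorem expected_check_loss_nonneg_at_quantile
    {Ω : Type*} [MeasurableSpace Ω] (μ : Measure Ω) [IsProbabilityMeasure μ]
    (ε : Ω → ℝ) (hε : Measurable ε) (τ : ℝ) (hτ : τ ∈ Set.Ioo (0 : ℝ) 1)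
    (hquantile : (μ {ω | ε ω ≤ 0}).toReal = τ) (v : ℝ) :
    (∫ ω, ((τ - if ε ω - v ≤ 0 then 1 else 0) * (ε ω - v)
          - (τ - if ε ω ≤ 0 then 1 else 0) * ε ω) ∂μ
        = ∫ s in (0 : ℝ)..v, ((μ {ω | ε ω ≤ s}).toReal - (μ {ω | ε ω ≤ 0}).toReal))
    ∧ 0 ≤ ∫ ω, ((τ - if ε ω - v ≤ 0 then 1 else 0) * (ε ω - v)
          - (τ - if ε ω ≤ 0 then 1 else 0) * ε ω) ∂μ :=
  expected_check_loss_nonneg_at_quantile_general μ ε hε τ hquantile v
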